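/- Let (X_m) be a birth-death chain on ℕ started at k ≥ 1 with up-probabilities r_n and l_n = 1 − r_n, 0 absorbing, and suppose ∑_{j=0}^∞ t_j < ∞ where t_0 = 1, t_n = ∏_{i=1}^n (l_i/r_i). Then with positive probability X_m → ∞ as m → ∞ (the chain never goes extinct), and this probability equals (∑_{j=0}^{k−1} t_j)/(∑_{j=0}^∞ t_j). -/

import Mathlib

open MeasureTheory ProbabilityTheory Filter Set

/-!
The scale function `φ(n) = t₀ + ⋯ + t_{n-1}` is harmonic for the chain (`φ(a) = r_a φ(a+1) +
l_a φ(a-1)` for `a ≥ 1`, and `φ(0) = 0` at the absorbing state) and bounded by `φ(∞) = ∑ tⱼ`, so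
`φ(X_m)` is a bounded martingale and converges almost surely. As `φ` is strictly increasing and
the chain cannot stay put at a positive state, convergence of `φ(X_m)` forces either `X_m → ∞`
or absorption at `0`; the limit is therefore `φ(∞) · 1{X_m → ∞}`. By dominated convergence its
expectation is `lim E φ(X_m) = φ(k)`, i.e. `φ(∞) · P(X_m → ∞) = φ(k)`.
-/

/-- A birth-death chain on ℕ with up-probabilities `r n` from state `n ≥ 1`,
down-probabilities `1 - r n`, state `0` absorbing, started at `k`. -/
structure IsBirthDeathChain {Ω : Type*} [MeasurableSpace Ω] (μ : Measure Ω)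
    (X : ℕ → Ω → ℕ) (r : ℕ → ℝ) (k : ℕ) : Prop where
  isProb : IsProbabilityMeasure μ
  meas : ∀ m, Measurable (X m)
  start : ∀ᵐ ω ∂μ, X 0 ω = k
  step_up : ∀ (m : ℕ) (path : ℕ → ℕ), 0 < path m →
    μ (⋂ i ∈ Finset.range (m + 1), {ω | X i ω = path i}) ≠ 0 →
    μ[{ω | X (m + 1) ω = path m + 1} | ⋂ i ∈ Finset.range (m + 1), {ω | X i ω = path i}]
      = ENNReal.ofReal (r (path m))
  step_down : ∀ (m : ℕ) (path : ℕ → ℕ), 0 < path m →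
    μ (⋂ i ∈ Finset.range (m + 1), {ω | X i ω = path i}) ≠ 0 →
    μ[{ω | X (m + 1) ω = path m - 1} | ⋂ i ∈ Finset.range (m + 1), {ω | X i ω = path i}]
      = ENNReal.ofReal (1 - r (path m))
  absorb : ∀ (m : ℕ) (path : ℕ → ℕ), path m = 0 →
    μ (⋂ i ∈ Finset.range (m + 1), {ω | X i ω = path i}) ≠ 0 →
    μ[{ω | X (m + 1) ω = 0} | ⋂ i ∈ Finset.range (m + 1), {ω | X i ω = path i}] = 1

open scoped ENNReal Topology

lemma tendsto_atTop_or_eventually_eq_zero_of_tendsto_comp {f : ℕ → ℝ} (hf : StrictMono f)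
    {L : ℝ} (hL : Tendsto f atTop (𝓝 L)) {x : ℕ → ℕ} (hx : ∀ m, 0 < x m → x (m + 1) ≠ x m)
    {c : ℝ} (hc : Tendsto (fun m => f (x m)) atTop (𝓝 c)) :
    Tendsto x atTop atTop ∨ ∀ᶠ m in atTop, x m = 0 := by
  have hfL : ∀ n, f n ≤ L := hf.monotone.ge_of_tendsto hL
  rcases (le_of_tendsto' hc fun m => hfL (x m)).lt_or_eq with hcL | rfl
  · -- `x` is eventually bounded, so `f ∘ x` is eventually equal to `c` and `x` is eventually
    -- constant, which only the absorbing state allows.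
    right
    obtain ⟨N, hN⟩ := (hL.eventually (lt_mem_nhds hcL)).exists
    have hbdd : ∀ᶠ m in atTop, x m < N :=
      (hc.eventually (gt_mem_nhds hN)).mono fun m hm => hf.lt_iff_lt.1 hm
    have havoid : ∀ᶠ m in atTop, ∀ a ∈ Iio N, f a ≠ c → f (x m) ≠ f a := by
      refine (eventually_all_finite (finite_Iio N)).2 fun a _ => ?_
      by_cases h : f a = c
      · simp [h]
      · exact (hc.eventually_ne (Ne.symm h)).mono fun m hm _ => hm
    have hconst : ∀ᶠ m in atTop, f (x m) = c :=
      (hbdd.and havoid).mono fun m hm => by_contra fun h => hm.2 (x m) hm.1 h rfl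
    filter_upwards [hconst, (tendsto_add_atTop_nat 1).eventually hconst] with m hm hm1
    by_contra h0
    exact hx m (Nat.pos_of_ne_zero h0) (hf.injective (hm1.trans hm.symm))
  · left
    refine tendsto_atTop.2 fun N => ?_
    have hN : f N < c := (hf N.lt_succ_self).trans_le (hfL _)
    exact (hc.eventually (lt_mem_nhds hN)).mono fun m hm => (hf.lt_iff_lt.1 hm).le

namespace BirthDeath

noncomputable def transProb (r : ℕ → ℝ) (a b : ℕ) : ℝ≥0∞ :=
  if a = 0 then (if b = 0 then 1 else 0)
  else if b = a + 1 then ENNReal.ofReal (r a)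
  else if b = a - 1 then ENNReal.ofReal (1 - r a) else 0

-- Harmonicity at the absorbing state `0` holds for every `φ`.
def IsHarmonic (r φ : ℕ → ℝ) : Prop :=
  ∀ a, 1 ≤ a → φ a = r a * φ (a + 1) + (1 - r a) * φ (a - 1)

variable {r : ℕ → ℝ}

lemma transProb_self {a : ℕ} (ha : a ≠ 0) : transProb r a a = 0 := by
  simp [transProb, ha, show a ≠ a - 1 by omega]

lemma tsum_transProb_mul_ofReal (hr : ∀ n, 1 ≤ n → r n ∈ Icc (0 : ℝ) 1) {φ : ℕ → ℝ}
    (hφ : ∀ n, 0 ≤ φ n) (hharm : IsHarmonic r φ) (a : ℕ) :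
    ∑' b, transProb r a b * ENNReal.ofReal (φ b) = ENNReal.ofReal (φ a) := by
  rcases Nat.eq_zero_or_pos a with rfl | ha
  · simp [transProb]
  have hra := hr a ha
  have hsupp : ∀ b ∉ ({a + 1, a - 1} : Finset ℕ), transProb r a b * ENNReal.ofReal (φ b) = 0 := by
    intro b hb
    simp only [Finset.mem_insert, Finset.mem_singleton, not_or] at hb
    simp [transProb, ha.ne', hb.1, hb.2]
  rw [tsum_eq_sum hsupp, Finset.sum_pair (by omega), hharm a ha,
    ENNReal.ofReal_add (mul_nonneg hra.1 (hφ _)) (mul_nonneg (by linarith [hra.2]) (hφ _)),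
    ENNReal.ofReal_mul hra.1, ENNReal.ofReal_mul (by linarith [hra.2])]
  simp [transProb, ha.ne', show a - 1 ≠ a + 1 by omega]

noncomputable def scale (t : ℕ → ℝ) (n : ℕ) : ℝ := ∑ j ∈ Finset.range n, t j

variable {t : ℕ → ℝ}

lemma isHarmonic_scale (hrec : ∀ a, 1 ≤ a → r a * t a = (1 - r a) * t (a - 1)) :
    IsHarmonic r (scale t) := by
  intro a ha
  obtain ⟨a, rfl⟩ := Nat.exists_eq_add_of_le' ha
  have := hrec (a + 1) ha
  simp only [scale, Finset.sum_range_succ, Nat.add_sub_cancel] at this ⊢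
  linear_combination -this

lemma strictMono_scale (ht : ∀ j, 0 < t j) : StrictMono (scale t) :=
  strictMono_nat_of_lt_succ fun n => by simp [scale, Finset.sum_range_succ, ht n]

lemma tendsto_scale (hsum : Summable t) : Tendsto (scale t) atTop (𝓝 (∑' j, t j)) :=
  hsum.hasSum.tendsto_sum_nat

noncomputable def ratioProd (r : ℕ → ℝ) (n : ℕ) : ℝ := ∏ i ∈ Finset.Icc 1 n, ((1 - r i) / r i)

lemma ratioProd_pos (hr : ∀ n, 1 ≤ n → r n ∈ Ioo (0 : ℝ) 1) (n : ℕ) : 0 < ratioProd r n :=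
  Finset.prod_pos fun i hi =>
    have hri := hr i (Finset.mem_Icc.1 hi).1
    div_pos (by linarith [hri.2]) hri.1

lemma mul_ratioProd (hr : ∀ n, 1 ≤ n → r n ≠ 0) {a : ℕ} (ha : 1 ≤ a) :
    r a * ratioProd r a = (1 - r a) * ratioProd r (a - 1) := by
  obtain ⟨a, rfl⟩ := Nat.exists_eq_add_of_le' ha
  rw [ratioProd, Finset.prod_Icc_succ_top (by omega), Nat.add_sub_cancel, ← ratioProd]
  field_simp [hr (a + 1) ha]

section History

variable {Ω : Type*}

def history (X : ℕ → Ω → ℕ) (m : ℕ) (ω : Ω) : Fin (m + 1) → ℕ := fun i => X i ω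

lemma history_preimage_singleton (X : ℕ → Ω → ℕ) (m : ℕ) (path : ℕ → ℕ) :
    history X m ⁻¹' {fun i : Fin (m + 1) => path i}
      = ⋂ i ∈ Finset.range (m + 1), {ω | X i ω = path i} := by
  ext ω
  simp [history, funext_iff, Fin.forall_iff]

variable [MeasurableSpace Ω] {X : ℕ → Ω → ℕ}

lemma measurable_history (hX : ∀ i, Measurable (X i)) (m : ℕ) : Measurable (history X m) :=
  measurable_pi_lambda _ fun i => hX i

def historyFiltration (hX : ∀ i, Measurable (X i)) : Filtration ℕ ‹MeasurableSpace Ω› where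
  seq m := MeasurableSpace.comap (history X m) inferInstance
  mono' m m' hm := measurable_iff_comap_le.1 <|
    (measurable_pi_lambda _ fun i => measurable_pi_apply (Fin.castLE (by omega) i)).comp
      (comap_measurable (history X m'))
  le' m := (measurable_history hX m).comap_le

end History

end BirthDeath

namespace IsBirthDeathChain

open BirthDeath

variable {Ω : Type*} [MeasurableSpace Ω] {μ : Measure Ω} {X : ℕ → Ω → ℕ} {r : ℕ → ℝ} {k : ℕ}

lemma cond_succ (hX : IsBirthDeathChain μ X r k) (hr : ∀ n, 1 ≤ n → r n ∈ Icc (0 : ℝ) 1)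
    (path : ℕ → ℕ) (m b : ℕ) (hC : μ (⋂ i ∈ Finset.range (m + 1), {ω | X i ω = path i}) ≠ 0) :
    μ[{ω | X (m + 1) ω = b} | ⋂ i ∈ Finset.range (m + 1), {ω | X i ω = path i}]
      = transProb r (path m) b := by
  -- Targets `b` not named in `hX` get no mass: the named moves already have total mass `1`.
  have := hX.isProb
  have := cond_isProbabilityMeasure hC
  have hlevel : ∀ c, MeasurableSet {ω | X (m + 1) ω = c} := fun c =>
    hX.meas (m + 1) (measurableSet_singleton c)
  rcases Nat.eq_zero_or_pos (path m) with ha | ha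
  · by_cases hb : b = 0
    · simpa [transProb, ha, hb] using hX.absorb m path ha hC
    · simp only [transProb, ha, hb, if_true, if_false]
      refine measure_mono_null (t := {ω | X (m + 1) ω = 0}ᶜ) (fun ω hω h0 => hb ?_) ?_
      · rw [← hω, h0]
      · rw [prob_compl_eq_one_sub (hlevel 0), hX.absorb m path ha hC, tsub_self]
  · by_cases hup : b = path m + 1
    · simpa [transProb, ha.ne', hup] using hX.step_up m path ha hC
    by_cases hdown : b = path m - 1
    · simpa [transProb, ha.ne', hup, hdown] using hX.step_down m path ha hC
    simp only [transProb, ha.ne', hup, hdown, if_false]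
    have hra := hr _ ha
    have hdisj : Disjoint {ω | X (m + 1) ω = path m + 1} {ω | X (m + 1) ω = path m - 1} :=
      disjoint_left.2 fun ω (h1 : X (m + 1) ω = _) (h2 : X (m + 1) ω = _) => by omega
    refine measure_mono_null
      (t := ({ω | X (m + 1) ω = path m + 1} ∪ {ω | X (m + 1) ω = path m - 1})ᶜ) ?_ ?_
    · rintro ω (hω : X (m + 1) ω = b) (h | h)
      exacts [hup (hω.symm.trans h), hdown (hω.symm.trans h)]
    · rw [prob_compl_eq_one_sub ((hlevel _).union (hlevel _)),
        measure_union hdisj (hlevel _),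
        hX.step_up m path ha hC, hX.step_down m path ha hC,
        ← ENNReal.ofReal_add hra.1 (by linarith [hra.2]), add_sub_cancel, ENNReal.ofReal_one,
        tsub_self]

lemma measure_history_inter_succ (hX : IsBirthDeathChain μ X r k)
    (hr : ∀ n, 1 ≤ n → r n ∈ Icc (0 : ℝ) 1) (m : ℕ) (y : Fin (m + 1) → ℕ) (b : ℕ) :
    μ (history X m ⁻¹' {y} ∩ {ω | X (m + 1) ω = b})
      = transProb r (y (Fin.last m)) b * μ (history X m ⁻¹' {y}) := by
  set path : ℕ → ℕ := fun i => if h : i < m + 1 then y ⟨i, h⟩ else 0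
  have hy : y = fun i : Fin (m + 1) => path i := funext fun i =>
    (show path i = y ⟨i, i.isLt⟩ from dif_pos i.isLt).symm
  have hlast : y (Fin.last m) = path m := by simp [path, Fin.last]
  rw [hlast, hy, history_preimage_singleton]
  set C := ⋂ i ∈ Finset.range (m + 1), {ω | X i ω = path i}
  by_cases hC : μ C = 0
  · rw [hC, mul_zero]
    exact measure_mono_null inter_subset_left hC
  have hCm : MeasurableSet C := Finset.measurableSet_biInter _ fun i _ =>
    hX.meas i (measurableSet_singleton _)
  have := hX.isProb
  rw [← hX.cond_succ hr path m b hC, cond_apply hCm, mul_comm, ← mul_assoc,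
    ENNReal.mul_inv_cancel hC (measure_ne_top μ C), one_mul]

lemma lintegral_history_succ (hX : IsBirthDeathChain μ X r k)
    (hr : ∀ n, 1 ≤ n → r n ∈ Icc (0 : ℝ) 1) (m : ℕ) (h : (Fin (m + 1) → ℕ) → ℕ → ℝ≥0∞) :
    ∫⁻ ω, h (history X m ω) (X (m + 1) ω) ∂μ
      = ∫⁻ ω, ∑' b, transProb r (X m ω) b * h (history X m ω) b ∂μ := by
  have hhist := measurable_history hX.meas m
  have hpair : Measurable fun ω => (history X m ω, X (m + 1) ω) := hhist.prodMk (hX.meas _)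
  change _ = ∫⁻ ω, (fun y => ∑' b, transProb r (y (Fin.last m)) b * h y b) (history X m ω) ∂μ
  rw [← lintegral_map (f := fun p => h p.1 p.2) (measurable_of_countable _) hpair,
    ← lintegral_map (f := fun y => ∑' b, transProb r (y (Fin.last m)) b * h y b)
      (measurable_of_countable _) hhist,
    lintegral_countable', lintegral_countable', ENNReal.tsum_prod']
  refine tsum_congr fun y => ?_
  rw [← ENNReal.tsum_mul_right]
  refine tsum_congr fun b => ?_
  rw [Measure.map_apply hpair (measurableSet_singleton _),
    Measure.map_apply hhist (measurableSet_singleton _), ← Set.singleton_prod_singleton,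
    Set.mk_preimage_prod]
  calc _ = h y b * μ (history X m ⁻¹' {y} ∩ {ω | X (m + 1) ω = b}) := rfl
    _ = _ := by rw [measure_history_inter_succ hX hr]; ring

lemma ae_ne_succ (hX : IsBirthDeathChain μ X r k) (hr : ∀ n, 1 ≤ n → r n ∈ Icc (0 : ℝ) 1) :
    ∀ᵐ ω ∂μ, ∀ m, 0 < X m ω → X (m + 1) ω ≠ X m ω := by
  refine ae_all_iff.2 fun m => ae_iff.2 (measure_mono_null (t := ⋃ y : Fin (m + 1) → ℕ,
    ⋃ (_ : 0 < y (Fin.last m)), history X m ⁻¹' {y} ∩ {ω | X (m + 1) ω = y (Fin.last m)})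
    ?_ (measure_iUnion_null fun y => measure_iUnion_null fun hy => ?_))
  · intro ω hω
    simp only [mem_ofPred_eq, Classical.not_imp, not_not] at hω
    exact mem_iUnion₂.2 ⟨history X m ω, hω.1, rfl, hω.2⟩
  · rw [hX.measure_history_inter_succ hr, transProb_self hy.ne', zero_mul]

variable {φ : ℕ → ℝ} {C L : ℝ}

lemma setLIntegral_comp_succ (hX : IsBirthDeathChain μ X r k)
    (hr : ∀ n, 1 ≤ n → r n ∈ Icc (0 : ℝ) 1) (hφ : ∀ n, 0 ≤ φ n) (hharm : IsHarmonic r φ)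
    (m : ℕ) (B : Set (Fin (m + 1) → ℕ)) :
    ∫⁻ ω in history X m ⁻¹' B, ENNReal.ofReal (φ (X (m + 1) ω)) ∂μ
      = ∫⁻ ω in history X m ⁻¹' B, ENNReal.ofReal (φ (X m ω)) ∂μ := by
  have hB : MeasurableSet (history X m ⁻¹' B) :=
    measurable_history hX.meas m B.to_countable.measurableSet
  rw [← lintegral_indicator hB, ← lintegral_indicator hB]
  refine (hX.lintegral_history_succ hr m
    (fun y b => B.indicator (fun _ => ENNReal.ofReal (φ b)) y)).trans (lintegral_congr fun ω => ?_)
  by_cases hω : history X m ω ∈ B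
  · simp [hω, tsum_transProb_mul_ofReal hr hφ hharm]
  · simp [hω]

lemma lintegral_comp_eq (hX : IsBirthDeathChain μ X r k)
    (hr : ∀ n, 1 ≤ n → r n ∈ Icc (0 : ℝ) 1) (hφ : ∀ n, 0 ≤ φ n) (hharm : IsHarmonic r φ)
    (m : ℕ) :
    ∫⁻ ω, ENNReal.ofReal (φ (X m ω)) ∂μ = ENNReal.ofReal (φ k) := by
  have := hX.isProb
  induction m with
  | zero =>
    rw [lintegral_congr_ae (hX.start.mono fun ω hω => by rw [hω]), lintegral_const, measure_univ,
      mul_one]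
  | succ m ih =>
    simpa [← ih] using hX.setLIntegral_comp_succ hr hφ hharm m univ

lemma martingale_comp (hX : IsBirthDeathChain μ X r k) (hr : ∀ n, 1 ≤ n → r n ∈ Icc (0 : ℝ) 1)
    (hφ : ∀ n, φ n ∈ Icc 0 C) (hharm : IsHarmonic r φ) :
    Martingale (fun m ω => φ (X m ω)) (historyFiltration hX.meas) μ := by
  have := hX.isProb
  have hφ0 : ∀ n, 0 ≤ φ n := fun n => (hφ n).1
  refine martingale_of_setIntegral_eq_succ (fun m => ?_) (fun m => ?_) fun m s hs => ?_
  · exact ((measurable_of_countable φ).comp ((measurable_pi_apply (Fin.last m)).comp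
      (comap_measurable (history X m)))).stronglyMeasurable
  · exact Integrable.of_bound ((measurable_of_countable φ).comp (hX.meas m)).aestronglyMeasurable
      C (ae_of_all _ fun ω => by simpa [abs_of_nonneg (hφ0 _)] using (hφ _).2)
  · obtain ⟨B, -, rfl⟩ := hs
    rw [integral_eq_lintegral_of_nonneg_ae (ae_of_all _ fun ω => hφ0 _)
        ((measurable_of_countable φ).comp (hX.meas m)).aestronglyMeasurable,
      integral_eq_lintegral_of_nonneg_ae (ae_of_all _ fun ω => hφ0 _)
        ((measurable_of_countable φ).comp (hX.meas (m + 1))).aestronglyMeasurable,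
      hX.setLIntegral_comp_succ hr hφ0 hharm]

lemma ae_exists_tendsto_comp (hX : IsBirthDeathChain μ X r k)
    (hr : ∀ n, 1 ≤ n → r n ∈ Icc (0 : ℝ) 1) (hφ : ∀ n, φ n ∈ Icc 0 C) (hharm : IsHarmonic r φ) :
    ∀ᵐ ω ∂μ, ∃ c, Tendsto (fun m => φ (X m ω)) atTop (𝓝 c) := by
  have := hX.isProb
  refine (hX.martingale_comp hr hφ hharm).submartingale.exists_ae_tendsto_of_bdd
    (R := C.toNNReal) fun m => ?_
  refine (eLpNorm_le_of_ae_bound (C := C) (ae_of_all _ fun ω => ?_)).trans_eq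
    (by simp [ENNReal.ofReal])
  simpa [abs_of_nonneg (hφ _).1] using (hφ _).2

lemma ae_tendsto_indicator (hX : IsBirthDeathChain μ X r k)
    (hr : ∀ n, 1 ≤ n → r n ∈ Icc (0 : ℝ) 1) (hmono : StrictMono φ) (hφ0 : φ 0 = 0)
    (hφL : Tendsto φ atTop (𝓝 L)) (hharm : IsHarmonic r φ) :
    ∀ᵐ ω ∂μ, Tendsto (fun m => ENNReal.ofReal (φ (X m ω))) atTop
      (𝓝 ({ω | Tendsto (fun m => X m ω) atTop atTop}.indicator (fun _ => ENNReal.ofReal L) ω)) := by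
  have hφ : ∀ n, φ n ∈ Icc 0 L := fun n =>
    ⟨hφ0 ▸ hmono.monotone n.zero_le, hmono.monotone.ge_of_tendsto hφL n⟩
  filter_upwards [hX.ae_ne_succ hr, hX.ae_exists_tendsto_comp hr hφ hharm] with ω hmove ⟨c, hc⟩
  rcases tendsto_atTop_or_eventually_eq_zero_of_tendsto_comp hmono hφL hmove hc with h | h
  · rw [indicator_of_mem (by exact h)]
    exact ENNReal.tendsto_ofReal (hφL.comp h)
  · have hnot : ¬ Tendsto (fun m => X m ω) atTop atTop := fun h' =>
      (h.and (h'.eventually_ge_atTop 1)).exists.elim fun m hm => by omega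
    rw [indicator_of_notMem (by exact hnot)]
    exact tendsto_const_nhds.congr' (h.mono fun m hm => by simp [hm, hφ0])

theorem mul_measure_tendsto_atTop (hX : IsBirthDeathChain μ X r k)
    (hr : ∀ n, 1 ≤ n → r n ∈ Icc (0 : ℝ) 1) (hmono : StrictMono φ) (hφ0 : φ 0 = 0)
    (hφL : Tendsto φ atTop (𝓝 L)) (hharm : IsHarmonic r φ) :
    ENNReal.ofReal L * μ {ω | Tendsto (fun m => X m ω) atTop atTop} = ENNReal.ofReal (φ k) := by
  have := hX.isProb
  have hφ : ∀ n, φ n ∈ Icc 0 L := fun n =>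
    ⟨hφ0 ▸ hmono.monotone n.zero_le, hmono.monotone.ge_of_tendsto hφL n⟩
  have hlim := tendsto_lintegral_of_dominated_convergence (μ := μ) (fun _ => ENNReal.ofReal L)
    (fun m => ENNReal.measurable_ofReal.comp ((measurable_of_countable φ).comp (hX.meas m)))
    (fun m => ae_of_all _ fun ω => ENNReal.ofReal_le_ofReal (hφ _).2)
    (by simp) (hX.ae_tendsto_indicator hr hmono hφ0 hφL hharm)
  simp only [Function.comp_apply, hX.lintegral_comp_eq hr (fun n => (hφ n).1) hharm,
    lintegral_indicator_const (measurableSet_tendsto _ hX.meas)] at hlim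
  exact tendsto_nhds_unique tendsto_const_nhds hlim |>.symm

end IsBirthDeathChain

open BirthDeath

/-- If `∑ tⱼ < ∞`, then with positive probability the chain tends to infinity (never goes
extinct), and this survival probability equals `(∑_{j=0}^{k−1} tⱼ)/(∑_{j=0}^∞ tⱼ)`. -/
theorem survival_probability {Ω : Type*} [MeasurableSpace Ω] (μ : Measure Ω)
    (X : ℕ → Ω → ℕ) (r : ℕ → ℝ) (k : ℕ) (hk : 1 ≤ k)
    (hr : ∀ n, 1 ≤ n → r n ∈ Set.Ioo (0 : ℝ) 1)
    (hX : IsBirthDeathChain μ X r k)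
    (t : ℕ → ℝ) (ht : ∀ n, t n = ∏ i ∈ Finset.Icc 1 n, ((1 - r i) / r i))
    (hsum : Summable t) :
    0 < μ {ω | Tendsto (fun m => X m ω) atTop atTop} ∧
      μ {ω | Tendsto (fun m => X m ω) atTop atTop}
        = ENNReal.ofReal ((∑ j ∈ Finset.range k, t j) / (∑' j : ℕ, t j)) := by
  obtain rfl : t = ratioProd r := funext ht
  have hpos := ratioProd_pos hr
  have hL : 0 < ∑' j, ratioProd r j := hsum.tsum_pos (fun j => (hpos j).le) 0 (hpos 0)
  have hφk : 0 < scale (ratioProd r) k := by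
    simpa [scale] using strictMono_scale hpos hk
  have key := hX.mul_measure_tendsto_atTop (fun n hn => Ioo_subset_Icc_self (hr n hn))
    (strictMono_scale hpos) (by simp [scale]) (tendsto_scale hsum)
    (isHarmonic_scale fun a ha => mul_ratioProd (fun n hn => (hr n hn).1.ne') ha)
  have hA : μ {ω | Tendsto (fun m => X m ω) atTop atTop}
      = ENNReal.ofReal (scale (ratioProd r) k / ∑' j, ratioProd r j) := by
    rw [ENNReal.ofReal_div_of_pos hL,
      ENNReal.eq_div_iff (ENNReal.ofReal_pos.2 hL).ne' ENNReal.ofReal_ne_top, key]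
  exact ⟨hA ▸ ENNReal.ofReal_pos.2 (div_pos hφk hL), hA⟩
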